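/- For 0 ≤ a ≤ 1 and b > 0, the inequality 7968(1-a+a²+b²)(1-a+a²)/b² · (L₃(a,b) - L₃(a,0)) = 52a(1-a) + 39(1-2a)² + 3a²(1-a)²(125 + 16(1-2a)²) + 3b²(1-a+a²)(21 + 32b² + 24(1-2a)²) > 0 holds; in particular L₃(a,0) < L₃(a,b), where L₃(a,b) = (b²+(1-a+a²+b²)²)/83 + (2a(1-a)-3b²)/96 - a(1-a)/(48(1-a+a²+b²)) and L₃(a,0) is its formal substitution at b=0. -/
import Mathlib


noncomputable def L3 (a b : ℝ) : ℝ :=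
  (b^2 + (1 - a + a^2 + b^2)^2)/83 + (2*a*(1 - a) - 3*b^2)/96
    - a*(1 - a)/(48*(1 - a + a^2 + b^2))

theorem L3_limit_lt (a b : ℝ) (ha0 : 0 ≤ a) (ha1 : a ≤ 1) (hb : 0 < b) :
    7968*(1 - a + a^2 + b^2)*(1 - a + a^2)/b^2 * (L3 a b - L3 a 0)
      = 52*a*(1 - a) + 39*(1 - 2*a)^2 + 3*a^2*(1 - a)^2*(125 + 16*(1 - 2*a)^2)
        + 3*b^2*(1 - a + a^2)*(21 + 32*b^2 + 24*(1 - 2*a)^2) ∧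
    0 < 52*a*(1 - a) + 39*(1 - 2*a)^2 + 3*a^2*(1 - a)^2*(125 + 16*(1 - 2*a)^2)
        + 3*b^2*(1 - a + a^2)*(21 + 32*b^2 + 24*(1 - 2*a)^2) ∧
    L3 a 0 < L3 a b := by
  have hq : (0:ℝ) < 1 - a + a^2 := by nlinarith [sq_nonneg (a - 1), sq_nonneg a]
  have hp : (0:ℝ) < 1 - a + a^2 + b^2 := by positivity
  have hb2 : (0:ℝ) < b^2 := by positivity
  have heq : 7968*(1 - a + a^2 + b^2)*(1 - a + a^2)/b^2 * (L3 a b - L3 a 0)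
      = 52*a*(1 - a) + 39*(1 - 2*a)^2 + 3*a^2*(1 - a)^2*(125 + 16*(1 - 2*a)^2)
        + 3*b^2*(1 - a + a^2)*(21 + 32*b^2 + 24*(1 - 2*a)^2) := by
    unfold L3
    field_simp
    ring
  have hpos : 0 < 52*a*(1 - a) + 39*(1 - 2*a)^2 + 3*a^2*(1 - a)^2*(125 + 16*(1 - 2*a)^2)
        + 3*b^2*(1 - a + a^2)*(21 + 32*b^2 + 24*(1 - 2*a)^2) := by
    nlinarith [sq_nonneg (1 - 2*a), sq_nonneg (a*(1-a)), mul_nonneg ha0 (by linarith : (0:ℝ) ≤ 1 - a), sq_nonneg b, mul_pos hb2 hq]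
  refine ⟨heq, hpos, ?_⟩
  have hc : 0 < 7968*(1 - a + a^2 + b^2)*(1 - a + a^2)/b^2 := by positivity
  rw [← heq] at hpos
  by_contra h
  push_neg at h
  nlinarith [mul_nonpos_of_nonneg_of_nonpos hc.le (sub_nonpos.mpr h)]
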